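/- arXiv:2007.07548 — 5 statements merged into one kernel-verified Lean document; each statement's English description precedes it below -/
import Mathlib

section
/- Let 0 < α < 2. Then the Cesàro operator is bounded from the Dirichlet-type space D_α into itself; more precisely, for every sequence (a_n)_{n≥0} of complex numbers with ∑_{n≥0} (n+1)^{1-α} |a_n|² < ∞, one has (∑_{n≥0} (n+1)^{1-α} |(1/(n+1)) ∑_{k=0}^{n} a_k|²)^{1/2} ≤ (√(2(2+α))/α) · (∑_{n≥0} (n+1)^{1-α} |a_n|²)^{1/2}. -/
/-!
Schur test with the weights `(k + 1) ^ (p - 1)`, `p = α / 2`. By Cauchy–Schwarz,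
`‖∑_{k ≤ n} a k‖² ≤ (∑_{k ≤ n} (k + 1) ^ (p - 1)) · ∑_{k ≤ n} (k + 1) ^ (1 - p) ‖a k‖²`, and the
first factor is at most `(n + 1) ^ p / p`. Summing over `n` and exchanging the order of summation
leaves the tails `∑_{n ≥ k} (n + 1) ^ (-(1 + p)) ≤ (1 + p) / p · (k + 1) ^ (-p)`, so the squared
norm grows by at most `(1 + p) / p² = 2 (2 + α) / α²`. Both power-sum estimates telescope, each
term being controlled by Bernoulli's inequality.
-/

open Finset Real

lemma mul_add_one_rpow_sub_one_le_sub {p x : ℝ} (hp0 : 0 ≤ p) (hp1 : p ≤ 1) (hx : 0 ≤ x) :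
    p * (x + 1) ^ (p - 1) ≤ (x + 1) ^ p - x ^ p := by
  have hy : 0 < x + 1 := by linarith
  have hs : -1 ≤ -(x + 1)⁻¹ := neg_le_neg (inv_le_one_of_one_le₀ (by linarith))
  have h := rpow_one_add_le_one_add_mul_self hs hp0 hp1
  rw [show 1 + -(x + 1)⁻¹ = x / (x + 1) by field_simp; ring, div_rpow hx hy.le,
    div_le_iff₀ (rpow_pos_of_pos hy p)] at h
  rw [rpow_sub_one hy.ne']
  linarith [show (1 + p * -(x + 1)⁻¹) * (x + 1) ^ p = (x + 1) ^ p - p * ((x + 1) ^ p / (x + 1)) by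
    ring]

lemma mul_add_one_rpow_neg_le_sub {p x : ℝ} (hp : 0 ≤ p) (hx : 0 < x) :
    p * (x + 1) ^ (-(1 + p)) ≤ x ^ (-p) - (x + 1) ^ (-p) := by
  have hy : 0 < x + 1 := by linarith
  have hX := rpow_pos_of_pos hx (1 + p)
  have hY := rpow_pos_of_pos hy (1 + p)
  have h := one_add_mul_self_le_rpow_one_add (s := x⁻¹) (by linarith [inv_pos.2 hx])
    (by linarith : 1 ≤ 1 + p)
  rw [show 1 + x⁻¹ = (x + 1) / x by field_simp, div_rpow hy.le hx.le, le_div_iff₀ hX] at h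
  have h' : (x + (1 + p)) * x ^ (1 + p) ≤ x * (x + 1) ^ (1 + p) := by
    have := mul_le_mul_of_nonneg_left h hx.le
    rwa [show x * ((1 + (1 + p) * x⁻¹) * x ^ (1 + p)) = (x + (1 + p)) * x ^ (1 + p) by
      field_simp] at this
  have e : ∀ {z : ℝ}, 0 < z → z ^ (-p) = z / z ^ (1 + p) := fun hz => by
    rw [rpow_add hz, rpow_one, rpow_neg hz.le]; field_simp
  rw [rpow_neg hy.le, e hx, e hy, div_sub_div _ _ hX.ne' hY.ne', le_div_iff₀ (by positivity),
    show p * ((x + 1) ^ (1 + p))⁻¹ * (x ^ (1 + p) * (x + 1) ^ (1 + p)) = p * x ^ (1 + p) by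
      field_simp]
  linarith

lemma sum_range_add_one_rpow_sub_one_le {p : ℝ} (hp0 : 0 < p) (hp1 : p ≤ 1) (n : ℕ) :
    ∑ k ∈ range n, ((k : ℝ) + 1) ^ (p - 1) ≤ (n : ℝ) ^ p / p := by
  rw [le_div_iff₀ hp0, sum_mul]
  calc ∑ k ∈ range n, ((k : ℝ) + 1) ^ (p - 1) * p
      ≤ ∑ k ∈ range n, (((k + 1 : ℕ) : ℝ) ^ p - (k : ℝ) ^ p) := by
        refine sum_le_sum fun k _ => ?_
        push_cast
        linarith [mul_add_one_rpow_sub_one_le_sub hp0.le hp1 k.cast_nonneg]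
    _ = (n : ℝ) ^ p := by
        rw [sum_range_sub (fun k : ℕ => (k : ℝ) ^ p)]
        simp [zero_rpow hp0.ne']

lemma sum_range_add_rpow_neg_le {p x : ℝ} (hp : 0 < p) (hx : 0 < x) (m : ℕ) :
    ∑ i ∈ range m, (x + i + 1) ^ (-(1 + p)) ≤ x ^ (-p) / p := by
  rw [le_div_iff₀ hp, sum_mul]
  calc ∑ i ∈ range m, (x + i + 1) ^ (-(1 + p)) * p
      ≤ ∑ i ∈ range m, ((x + i) ^ (-p) - (x + (i + 1 : ℕ)) ^ (-p)) := by
        refine sum_le_sum fun i _ => ?_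
        push_cast
        rw [← add_assoc]
        linarith [mul_add_one_rpow_neg_le_sub hp.le (by positivity : 0 < x + i)]
    _ = x ^ (-p) - (x + m) ^ (-p) := by
        rw [sum_range_sub' (fun i : ℕ => (x + i) ^ (-p))]
        simp
    _ ≤ x ^ (-p) := sub_le_self _ (by positivity)

lemma sum_Ico_add_one_rpow_neg_le {p : ℝ} (hp : 0 < p) (k N : ℕ) :
    ∑ n ∈ Ico k N, ((n : ℝ) + 1) ^ (-(1 + p)) ≤ (1 + p) / p * ((k : ℝ) + 1) ^ (-p) := by
  have hk : 1 ≤ (k : ℝ) + 1 := by linarith [k.cast_nonneg (α := ℝ)]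
  rw [sum_Ico_eq_sum_range]
  cases N - k with
  | zero => simp only [range_zero, sum_empty]; positivity
  | succ m =>
    have head : ((k : ℝ) + 1) ^ (-(1 + p)) ≤ ((k : ℝ) + 1) ^ (-p) :=
      rpow_le_rpow_of_exponent_le hk (by linarith)
    have tail := sum_range_add_rpow_neg_le hp (by linarith) m (x := (k : ℝ) + 1)
    rw [sum_range_succ', show (1 + p) / p * ((k : ℝ) + 1) ^ (-p)
      = ((k : ℝ) + 1) ^ (-p) / p + ((k : ℝ) + 1) ^ (-p) by field_simp]
    refine add_le_add ((le_of_eq (sum_congr rfl fun i _ => ?_)).trans tail) (by simpa using head)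
    push_cast
    ring_nf

lemma sum_range_rpow_neg_mul_sum_range_le {p : ℝ} (hp : 0 < p) {b : ℕ → ℝ} (hb : ∀ k, 0 ≤ b k)
    (N : ℕ) :
    ∑ n ∈ range N, ((n : ℝ) + 1) ^ (-(1 + p)) * ∑ k ∈ range (n + 1), b k
      ≤ (1 + p) / p * ∑ k ∈ range N, ((k : ℝ) + 1) ^ (-p) * b k := by
  calc ∑ n ∈ range N, ((n : ℝ) + 1) ^ (-(1 + p)) * ∑ k ∈ range (n + 1), b k
      = ∑ k ∈ range N, b k * ∑ n ∈ Ico k N, ((n : ℝ) + 1) ^ (-(1 + p)) := by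
        simp only [mul_sum, range_eq_Ico]
        rw [sum_Ico_Ico_comm]
        simp only [mul_comm]
    _ ≤ ∑ k ∈ range N, b k * ((1 + p) / p * ((k : ℝ) + 1) ^ (-p)) :=
        sum_le_sum fun k _ => mul_le_mul_of_nonneg_left (sum_Ico_add_one_rpow_neg_le hp k N) (hb k)
    _ = (1 + p) / p * ∑ k ∈ range N, ((k : ℝ) + 1) ^ (-p) * b k := by
        rw [mul_sum]
        exact sum_congr rfl fun k _ => by ring

lemma norm_sum_range_sq_le {E : Type*} [SeminormedAddCommGroup E] {p : ℝ} (hp0 : 0 < p)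
    (hp1 : p ≤ 1) (a : ℕ → E) (n : ℕ) :
    ‖∑ k ∈ range n, a k‖ ^ 2
      ≤ (n : ℝ) ^ p / p * ∑ k ∈ range n, ((k : ℝ) + 1) ^ (1 - p) * ‖a k‖ ^ 2 := by
  calc ‖∑ k ∈ range n, a k‖ ^ 2 ≤ (∑ k ∈ range n, ‖a k‖) ^ 2 :=
        pow_le_pow_left₀ (norm_nonneg _) (norm_sum_le _ _) 2
    _ ≤ (∑ k ∈ range n, ((k : ℝ) + 1) ^ (p - 1)) *
          ∑ k ∈ range n, ((k : ℝ) + 1) ^ (1 - p) * ‖a k‖ ^ 2 := by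
        refine sum_sq_le_sum_mul_sum_of_sq_le_mul _ (fun _ _ => by positivity)
          (fun _ _ => by positivity) fun k _ => le_of_eq ?_
        rw [← mul_assoc, ← rpow_add (by positivity)]
        simp
    _ ≤ _ := mul_le_mul_of_nonneg_right (sum_range_add_one_rpow_sub_one_le hp0 hp1 n)
        (sum_nonneg fun _ _ => by positivity)

lemma rpow_mul_norm_cesaro_sq_le {p : ℝ} (hp0 : 0 < p) (hp1 : p ≤ 1) (a : ℕ → ℂ) (n : ℕ) :
    ((n : ℝ) + 1) ^ (1 - 2 * p) * ‖(1 / ((n : ℂ) + 1)) * ∑ k ∈ range (n + 1), a k‖ ^ 2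
      ≤ ((n : ℝ) + 1) ^ (-(1 + p)) / p *
          ∑ k ∈ range (n + 1), ((k : ℝ) + 1) ^ (1 - p) * ‖a k‖ ^ 2 := by
  have hx : (0 : ℝ) < n + 1 := by positivity
  have hnorm : ‖1 / ((n : ℂ) + 1)‖ = ((n : ℝ) + 1)⁻¹ := by
    rw [one_div, norm_inv, show ‖(n : ℂ) + 1‖ = (n : ℝ) + 1 by
      exact_mod_cast Complex.norm_natCast (n + 1)]
  have hexp : ((n : ℝ) + 1) ^ (1 - 2 * p) * (((n : ℝ) + 1)⁻¹) ^ 2 * ((n : ℝ) + 1) ^ p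
      = ((n : ℝ) + 1) ^ (-(1 + p)) := by
    rw [← rpow_neg_one, ← rpow_natCast, ← rpow_mul hx.le, ← rpow_add hx, ← rpow_add hx]
    norm_num
    ring_nf
  have hcs := norm_sum_range_sq_le hp0 hp1 a (n + 1)
  push_cast at hcs
  rw [norm_mul, hnorm, mul_pow, ← hexp]
  calc ((n : ℝ) + 1) ^ (1 - 2 * p) * ((((n : ℝ) + 1)⁻¹) ^ 2 * ‖∑ k ∈ range (n + 1), a k‖ ^ 2)
      = ((n : ℝ) + 1) ^ (1 - 2 * p) * (((n : ℝ) + 1)⁻¹) ^ 2 * ‖∑ k ∈ range (n + 1), a k‖ ^ 2 := by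
        ring
    _ ≤ ((n : ℝ) + 1) ^ (1 - 2 * p) * (((n : ℝ) + 1)⁻¹) ^ 2 * (((n : ℝ) + 1) ^ p / p *
          ∑ k ∈ range (n + 1), ((k : ℝ) + 1) ^ (1 - p) * ‖a k‖ ^ 2) := by gcongr
    _ = _ := by ring

theorem sum_range_rpow_mul_norm_cesaro_sq_le {α : ℝ} (hα0 : 0 < α) (hα2 : α ≤ 2) (a : ℕ → ℂ)
    (N : ℕ) :
    ∑ n ∈ range N, ((n : ℝ) + 1) ^ (1 - α) * ‖(1 / ((n : ℂ) + 1)) * ∑ k ∈ range (n + 1), a k‖ ^ 2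
      ≤ 2 * (2 + α) / α ^ 2 * ∑ n ∈ range N, ((n : ℝ) + 1) ^ (1 - α) * ‖a n‖ ^ 2 := by
  obtain ⟨p, rfl⟩ : ∃ p, α = 2 * p := ⟨α / 2, by ring⟩
  have hp0 : 0 < p := by linarith
  set b : ℕ → ℝ := fun k => ((k : ℝ) + 1) ^ (1 - p) * ‖a k‖ ^ 2
  calc ∑ n ∈ range N, ((n : ℝ) + 1) ^ (1 - 2 * p) *
        ‖(1 / ((n : ℂ) + 1)) * ∑ k ∈ range (n + 1), a k‖ ^ 2
      ≤ ∑ n ∈ range N, ((n : ℝ) + 1) ^ (-(1 + p)) / p * ∑ k ∈ range (n + 1), b k :=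
        sum_le_sum fun n _ => rpow_mul_norm_cesaro_sq_le hp0 (by linarith) a n
    _ = p⁻¹ * ∑ n ∈ range N, ((n : ℝ) + 1) ^ (-(1 + p)) * ∑ k ∈ range (n + 1), b k := by
        rw [mul_sum]
        exact sum_congr rfl fun n _ => by ring
    _ ≤ p⁻¹ * ((1 + p) / p * ∑ k ∈ range N, ((k : ℝ) + 1) ^ (-p) * b k) := by
        gcongr
        exact sum_range_rpow_neg_mul_sum_range_le hp0 (fun k => by positivity) N
    _ = _ := by
        rw [mul_sum, mul_sum, mul_sum]
        refine sum_congr rfl fun k _ => ?_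
        rw [show 1 - 2 * p = -p + (1 - p) by ring, rpow_add (by positivity)]
        field_simp
        ring

/-- For `0 < α < 2`, the Cesàro operator is bounded from the Dirichlet-type space
`D_α` into itself, with norm at most `√(2(2+α))/α`. -/
theorem cesaro_bounded_on_dirichlet_type (α : ℝ) (hα0 : 0 < α) (hα2 : α < 2)
    (a : ℕ → ℂ)
    (ha : Summable fun n : ℕ => ((n : ℝ) + 1) ^ (1 - α) * ‖a n‖ ^ 2) :
    Summable (fun n : ℕ => ((n : ℝ) + 1) ^ (1 - α) *
      ‖(1 / ((n : ℂ) + 1)) * ∑ k ∈ Finset.range (n + 1), a k‖ ^ 2) ∧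
    (∑' n : ℕ, ((n : ℝ) + 1) ^ (1 - α) *
        ‖(1 / ((n : ℂ) + 1)) * ∑ k ∈ Finset.range (n + 1), a k‖ ^ 2) ^ ((1 : ℝ) / 2) ≤
      (Real.sqrt (2 * (2 + α)) / α) *
        (∑' n : ℕ, ((n : ℝ) + 1) ^ (1 - α) * ‖a n‖ ^ 2) ^ ((1 : ℝ) / 2) := by
  have hc : ∀ n : ℕ, 0 ≤ ((n : ℝ) + 1) ^ (1 - α) *
      ‖(1 / ((n : ℂ) + 1)) * ∑ k ∈ range (n + 1), a k‖ ^ 2 := fun n => by positivity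
  have hpartial : ∀ N, ∑ n ∈ range N, ((n : ℝ) + 1) ^ (1 - α) *
      ‖(1 / ((n : ℂ) + 1)) * ∑ k ∈ range (n + 1), a k‖ ^ 2
        ≤ 2 * (2 + α) / α ^ 2 * ∑' n : ℕ, ((n : ℝ) + 1) ^ (1 - α) * ‖a n‖ ^ 2 := fun N =>
    (sum_range_rpow_mul_norm_cesaro_sq_le hα0 hα2.le a N).trans <|
      mul_le_mul_of_nonneg_left (ha.sum_le_tsum _ fun n _ => by positivity) (by positivity)
  refine ⟨summable_of_sum_range_le hc hpartial, ?_⟩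
  calc _ ≤ (2 * (2 + α) / α ^ 2 * ∑' n : ℕ, ((n : ℝ) + 1) ^ (1 - α) * ‖a n‖ ^ 2) ^ ((1 : ℝ) / 2) :=
        rpow_le_rpow (tsum_nonneg hc) (Real.tsum_le_of_sum_range_le hc hpartial) (by norm_num)
    _ = _ := by
        rw [mul_rpow (by positivity) (tsum_nonneg fun n => by positivity), ← sqrt_eq_rpow,
          sqrt_div' _ (sq_nonneg α), sqrt_sq hα0.le]
end

section
/- Let 0 < α < 2 and let β be a real number with β < α. Then the Cesàro operator is not bounded from D_α into D_β: there is no constant C > 0 such that ∑_{n≥0} (n+1)^{1-β} |(1/(n+1)) ∑_{k=0}^{n} a_k|² ≤ C ∑_{n≥0} (n+1)^{1-α} |a_n|² holds for every complex sequence (a_n)_{n≥0} with ∑_{n≥0} (n+1)^{1-α} |a_n|² < ∞. -/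
/-!
Test the inequality on the indicator `a` of the block `[N, 2N)`. Its squared `D_α` norm is
`≍ N^(2-α)`, while `C a` equals `N / (n+1)` for `n ≥ 2N - 1`, so the `N` coefficients with
`n + 1 ∈ [2N, 3N)` alone give `‖C a‖²_{D_β} ≳ N^(2-β)`. The ratio `N^(α-β)` is unbounded.
-/

open Finset Filter

theorem rpow_le_mul_rpow_of_mem_Icc {N x K : ℝ} (s : ℝ) (hN : 0 < N)
    (hx : x ∈ Set.Icc N (K * N)) : x ^ s ≤ K ^ |s| * N ^ s := by
  have ht : 1 ≤ x / N := (one_le_div hN).2 hx.1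
  have htK : x / N ≤ K := (div_le_iff₀ hN).2 hx.2
  calc x ^ s = (x / N) ^ s * N ^ s := by
        rw [← Real.mul_rpow (by positivity) hN.le, div_mul_cancel₀ _ hN.ne']
    _ ≤ K ^ |s| * N ^ s := by
        gcongr
        calc (x / N) ^ s ≤ (x / N) ^ |s| := Real.rpow_le_rpow_of_exponent_le ht (le_abs_self s)
          _ ≤ K ^ |s| := by gcongr

theorem mul_rpow_le_rpow_of_mem_Icc {N x K : ℝ} (s : ℝ) (hN : 0 < N)
    (hx : x ∈ Set.Icc N (K * N)) : K ^ (-|s|) * N ^ s ≤ x ^ s := by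
  have ht : 1 ≤ x / N := (one_le_div hN).2 hx.1
  have htK : x / N ≤ K := (div_le_iff₀ hN).2 hx.2
  calc K ^ (-|s|) * N ^ s ≤ (x / N) ^ s * N ^ s := by
        gcongr
        calc K ^ (-|s|) ≤ (x / N) ^ (-|s|) :=
              Real.rpow_le_rpow_of_nonpos (by linarith) htK (by simp)
          _ ≤ (x / N) ^ s := Real.rpow_le_rpow_of_exponent_le ht (neg_abs_le s)
    _ = x ^ s := by rw [← Real.mul_rpow (by positivity) hN.le, div_mul_cancel₀ _ hN.ne']

noncomputable section

def cesaro (a : ℕ → ℂ) (n : ℕ) : ℂ := 1 / ((n : ℂ) + 1) * ∑ k ∈ range (n + 1), a k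

def dirichletSummand (α : ℝ) (a : ℕ → ℂ) (n : ℕ) : ℝ := ((n : ℝ) + 1) ^ (1 - α) * ‖a n‖ ^ 2

def blockIndicator (N k : ℕ) : ℂ := if k ∈ Ico N (2 * N) then 1 else 0

end

theorem dirichletSummand_nonneg (α : ℝ) (a : ℕ → ℂ) (n : ℕ) : 0 ≤ dirichletSummand α a n := by
  unfold dirichletSummand
  positivity

theorem dirichletSummand_blockIndicator_of_not_mem {α : ℝ} {N n : ℕ} (hn : n ∉ Ico N (2 * N)) :
    dirichletSummand α (blockIndicator N) n = 0 := by
  simp [dirichletSummand, blockIndicator, hn]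

theorem summable_dirichletSummand_blockIndicator (α : ℝ) (N : ℕ) :
    Summable (dirichletSummand α (blockIndicator N)) :=
  summable_of_ne_finset_zero fun _ hn => dirichletSummand_blockIndicator_of_not_mem hn

theorem tsum_dirichletSummand_blockIndicator_le (α : ℝ) {N : ℕ} (hN : 0 < N) :
    ∑' n, dirichletSummand α (blockIndicator N) n ≤ 3 ^ |1 - α| * (N : ℝ) ^ (2 - α) := by
  have hNR : (0 : ℝ) < N := by exact_mod_cast hN
  have hterm : ∀ n ∈ Ico N (2 * N),
      dirichletSummand α (blockIndicator N) n ≤ 3 ^ |1 - α| * (N : ℝ) ^ (1 - α) := by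
    intro n hn
    have hn' := mem_Ico.1 hn
    simp only [dirichletSummand, blockIndicator, if_pos hn, norm_one, one_pow, mul_one]
    refine rpow_le_mul_rpow_of_mem_Icc _ hNR ⟨?_, ?_⟩
    · linarith [(Nat.cast_le (α := ℝ)).2 hn'.1]
    · have : ((n + 1 : ℕ) : ℝ) ≤ ((2 * N : ℕ) : ℝ) := Nat.cast_le.2 hn'.2
      push_cast at this
      linarith
  calc ∑' n, dirichletSummand α (blockIndicator N) n
      = ∑ n ∈ Ico N (2 * N), dirichletSummand α (blockIndicator N) n :=
        tsum_eq_sum fun _ hn => dirichletSummand_blockIndicator_of_not_mem hn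
    _ ≤ N * (3 ^ |1 - α| * (N : ℝ) ^ (1 - α)) := by
        simpa [two_mul] using sum_le_card_nsmul _ _ _ hterm
    _ = 3 ^ |1 - α| * (N : ℝ) ^ (2 - α) := by
        rw [show 2 - α = 1 + (1 - α) by ring, Real.rpow_add hNR, Real.rpow_one]
        ring

theorem sum_range_blockIndicator_of_le {N n : ℕ} (hn : 2 * N ≤ n + 1) :
    ∑ k ∈ range (n + 1), blockIndicator N k = N := by
  simp only [blockIndicator]
  rw [sum_ite_mem, inter_eq_right.2, sum_const, Nat.card_Ico]
  · simp [two_mul]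
  · intro k hk
    simp only [mem_Ico, mem_range] at hk ⊢
    omega

theorem dirichletSummand_cesaro_blockIndicator_of_le (β : ℝ) {N n : ℕ} (hn : 2 * N ≤ n + 1) :
    dirichletSummand β (cesaro (blockIndicator N)) n =
      (N : ℝ) ^ 2 * ((n : ℝ) + 1) ^ (-1 - β) := by
  have hn1 : (0 : ℝ) < (n : ℝ) + 1 := by positivity
  have hnorm : ‖cesaro (blockIndicator N) n‖ = N / ((n : ℝ) + 1) := by
    rw [cesaro, sum_range_blockIndicator_of_le hn, one_div_mul_eq_div, norm_div,
      Complex.norm_natCast, ← Nat.cast_succ, Complex.norm_natCast, Nat.cast_succ]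
  rw [dirichletSummand, hnorm, show 1 - β = (-1 - β) + 2 by ring, Real.rpow_add hn1,
    Real.rpow_two]
  field_simp

theorem le_tsum_dirichletSummand_cesaro_blockIndicator (β : ℝ) {N : ℕ} (hN : 0 < N)
    (hsum : Summable (dirichletSummand β (cesaro (blockIndicator N)))) :
    3 ^ (-|1 + β|) * (N : ℝ) ^ (2 - β) ≤
      ∑' n, dirichletSummand β (cesaro (blockIndicator N)) n := by
  have hNR : (0 : ℝ) < N := by exact_mod_cast hN
  have hterm : ∀ n ∈ Ico (2 * N - 1) (3 * N - 1),
      (N : ℝ) ^ 2 * (3 ^ (-|1 + β|) * (N : ℝ) ^ (-1 - β)) ≤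
        dirichletSummand β (cesaro (blockIndicator N)) n := by
    intro n hn
    have hn' := mem_Ico.1 hn
    rw [dirichletSummand_cesaro_blockIndicator_of_le β (by omega)]
    gcongr
    rw [show -1 - β = -(1 + β) by ring, ← abs_neg (1 + β)]
    refine mul_rpow_le_rpow_of_mem_Icc _ hNR ⟨?_, ?_⟩
    · have : ((2 * N : ℕ) : ℝ) ≤ ((n + 1 : ℕ) : ℝ) := Nat.cast_le.2 (by omega)
      push_cast at this
      linarith
    · have : ((n + 1 : ℕ) : ℝ) ≤ ((3 * N : ℕ) : ℝ) := Nat.cast_le.2 (by omega)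
      push_cast at this
      linarith
  calc 3 ^ (-|1 + β|) * (N : ℝ) ^ (2 - β)
      = N * ((N : ℝ) ^ 2 * (3 ^ (-|1 + β|) * (N : ℝ) ^ (-1 - β))) := by
        rw [show 2 - β = (3 : ℕ) + (-1 - β) by norm_num; ring, Real.rpow_add hNR,
          Real.rpow_natCast]
        ring
    _ ≤ ∑ n ∈ Ico (2 * N - 1) (3 * N - 1), dirichletSummand β (cesaro (blockIndicator N)) n := by
        have := card_nsmul_le_sum _ _ _ hterm
        rwa [Nat.card_Ico, show 3 * N - 1 - (2 * N - 1) = N by omega, nsmul_eq_mul] at this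
    _ ≤ ∑' n, dirichletSummand β (cesaro (blockIndicator N)) n :=
        hsum.sum_le_tsum _ fun n _ => dirichletSummand_nonneg β _ n

theorem cesaro_not_bounded_general (α β : ℝ) (hβα : β < α) :
    ¬ ∃ C > (0 : ℝ), ∀ a : ℕ → ℂ,
        Summable (fun n : ℕ => ((n : ℝ) + 1) ^ (1 - α) * ‖a n‖ ^ 2) →
        Summable (fun n : ℕ => ((n : ℝ) + 1) ^ (1 - β) *
          ‖(1 / ((n : ℂ) + 1)) * ∑ k ∈ Finset.range (n + 1), a k‖ ^ 2) ∧
        ∑' n : ℕ, ((n : ℝ) + 1) ^ (1 - β) *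
            ‖(1 / ((n : ℂ) + 1)) * ∑ k ∈ Finset.range (n + 1), a k‖ ^ 2 ≤
          C * ∑' n : ℕ, ((n : ℝ) + 1) ^ (1 - α) * ‖a n‖ ^ 2 := by
  rintro ⟨C, hC, hbound⟩
  have hgrowth : Tendsto (fun N : ℕ => (N : ℝ) ^ (α - β)) atTop atTop :=
    (tendsto_rpow_atTop (sub_pos.2 hβα)).comp tendsto_natCast_atTop_atTop
  obtain ⟨N, hN, hN_large⟩ := ((eventually_gt_atTop 0).and
    (hgrowth.eventually_gt_atTop (C * 3 ^ |1 - α| * 3 ^ |1 + β|))).exists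
  have hNR : (0 : ℝ) < N := by exact_mod_cast hN
  obtain ⟨hsum, hle⟩ := hbound (blockIndicator N) (summable_dirichletSummand_blockIndicator α N)
  have hlower := le_tsum_dirichletSummand_cesaro_blockIndicator β hN hsum
  have hupper := tsum_dirichletSummand_blockIndicator_le α hN
  have key : 3 ^ (-|1 + β|) * (N : ℝ) ^ (2 - β) ≤ C * (3 ^ |1 - α| * (N : ℝ) ^ (2 - α)) :=
    hlower.trans (hle.trans (mul_le_mul_of_nonneg_left hupper hC.le))
  rw [show 2 - β = (α - β) + (2 - α) by ring, Real.rpow_add hNR,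
    Real.rpow_neg (by norm_num)] at key
  have h3 : (0 : ℝ) < 3 ^ |1 + β| := by positivity
  have hN2 : (0 : ℝ) < (N : ℝ) ^ (2 - α) := by positivity
  rw [inv_mul_le_iff₀ h3] at key
  linarith [mul_lt_mul_of_pos_right hN_large hN2]

/-- For `0 < α < 2` and `β < α`, the Cesàro operator is not bounded from `D_α` into `D_β`:
no constant `C > 0` satisfies
`∑ (n+1)^{1-β} |(1/(n+1)) ∑_{k=0}^n a_k|² ≤ C ∑ (n+1)^{1-α} |a_n|²`
for every coefficient sequence `a` in `D_α`. -/
theorem cesaro_not_bounded (α β : ℝ) (hα0 : 0 < α) (hα2 : α < 2) (hβα : β < α) :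
    ¬ ∃ C > (0 : ℝ), ∀ a : ℕ → ℂ,
        Summable (fun n : ℕ => ((n : ℝ) + 1) ^ (1 - α) * ‖a n‖ ^ 2) →
        Summable (fun n : ℕ => ((n : ℝ) + 1) ^ (1 - β) *
          ‖(1 / ((n : ℂ) + 1)) * ∑ k ∈ Finset.range (n + 1), a k‖ ^ 2) ∧
        ∑' n : ℕ, ((n : ℝ) + 1) ^ (1 - β) *
            ‖(1 / ((n : ℂ) + 1)) * ∑ k ∈ Finset.range (n + 1), a k‖ ^ 2 ≤
          C * ∑' n : ℕ, ((n : ℝ) + 1) ^ (1 - α) * ‖a n‖ ^ 2 :=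
  cesaro_not_bounded_general α β hβα
end

section
/- Let 0 < α < 2, 0 < β < 2, and let μ be a positive (finite) Borel measure on [0,1). Suppose there exists a constant C > 0 such that ∑_{n≥0} (n+1)^{1-β} (μ[n])² |∑_{k=0}^{n} a_k|² ≤ C ∑_{n≥0} (n+1)^{1-α} |a_n|² for every complex sequence (a_n)_{n≥0} with ∑_{n≥0} (n+1)^{1-α} |a_n|² < ∞ (i.e., C_μ : D_α → D_β is bounded). Then μ is a [1 + (α-β)/2]-Carleson measure on [0,1), i.e., there is a constant C' > 0 with μ([b,1)) ≤ C' (1-b)^{1+(α-β)/2} for all b ∈ [0,1). -/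
/-!
Test the boundedness on the coefficients `a = 𝟙_{[0,N)}`, with `N ≈ 1/(4(1-b))`. The right-hand
side is `∑_{n<N} (n+1)^{1-α} ≲ N^{2-α}` since `α < 2`. On the left, for `N ≤ n < 2N` the partial
sums equal `N` and Bernoulli's inequality gives `μ[n] ≥ b^n μ([b,1)) ≥ μ([b,1))/2`, so the left-hand
side is `≳ N^{4-β} μ([b,1))²`. Hence `μ([b,1))² ≲ N^{-(2+α-β)} ≍ (1-b)^{2+α-β}`. For `b ≤ 3/4` the
Carleson bound only needs `μ` to be finite.
-/

open MeasureTheory Finset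

lemma min_one_mul_rpow_le_rpow_sub_rpow {p x : ℝ} (hp : 0 < p) (hx : 0 ≤ x) :
    min 1 p * (x + 1) ^ (p - 1) ≤ (x + 1) ^ p - x ^ p := by
  have hx1 : 0 < x + 1 := by linarith
  rcases le_total 1 p with hp1 | hp1
  · have hsplit : (x + 1) ^ p = (x + 1) * (x + 1) ^ (p - 1) := by
      rw [Real.rpow_sub_one hx1.ne', mul_div_cancel₀ _ hx1.ne']
    have hxp : x ^ p ≤ x * (x + 1) ^ (p - 1) :=
      calc x ^ p = x * x ^ (p - 1) := by
            rw [← Real.rpow_one_add' hx (by linarith), add_sub_cancel]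
        _ ≤ x * (x + 1) ^ (p - 1) := by gcongr; linarith
    rw [min_eq_left hp1]
    linarith
  · have hbernoulli : (1 + -(x + 1)⁻¹) ^ p ≤ 1 + p * -(x + 1)⁻¹ :=
      rpow_one_add_le_one_add_mul_self (neg_le_neg (inv_le_one_of_one_le₀ (by linarith)))
        hp.le hp1
    have hbase : 1 + -(x + 1)⁻¹ = x / (x + 1) := by field_simp; ring
    rw [hbase, Real.div_rpow hx hx1.le, div_le_iff₀ (by positivity)] at hbernoulli
    rw [min_eq_right hp1, Real.rpow_sub_one hx1.ne']
    linarith [hbernoulli.trans_eq (by ring : (1 + p * -(x + 1)⁻¹) * (x + 1) ^ p =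
      (x + 1) ^ p - p * ((x + 1) ^ p / (x + 1)))]

lemma min_one_mul_sum_range_rpow_le {p : ℝ} (hp : 0 < p) (N : ℕ) :
    min 1 p * ∑ n ∈ range N, ((n : ℝ) + 1) ^ (p - 1) ≤ (N : ℝ) ^ p :=
  calc min 1 p * ∑ n ∈ range N, ((n : ℝ) + 1) ^ (p - 1)
      ≤ ∑ n ∈ range N, ((((n + 1 : ℕ) : ℝ)) ^ p - ((n : ℕ) : ℝ) ^ p) := by
        rw [mul_sum]
        gcongr with n
        push_cast
        exact min_one_mul_rpow_le_rpow_sub_rpow hp n.cast_nonneg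
    _ = (N : ℝ) ^ p := by
        rw [sum_range_sub (fun n : ℕ => (n : ℝ) ^ p)]
        simp [Real.zero_rpow hp.ne']

lemma rpow_le_two_rpow_abs_mul_rpow {x y : ℝ} (hx : 0 < x) (hxy : x ≤ y) (hyx : y ≤ 2 * x)
    (p : ℝ) : y ^ p ≤ 2 ^ |p| * x ^ p := by
  rcases le_total 0 p with hp | hp
  · rw [abs_of_nonneg hp, ← Real.mul_rpow zero_le_two hx.le]
    exact Real.rpow_le_rpow (hx.le.trans hxy) hyx hp
  · calc y ^ p ≤ x ^ p := Real.rpow_le_rpow_of_nonpos hx hxy hp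
      _ ≤ 2 ^ |p| * x ^ p :=
        le_mul_of_one_le_left (by positivity) (Real.one_le_rpow one_le_two (abs_nonneg p))

lemma rpow_le_two_rpow_abs_mul_rpow' {x y : ℝ} (hx : 0 < x) (hxy : x ≤ y) (hyx : y ≤ 2 * x)
    (p : ℝ) : x ^ p ≤ 2 ^ |p| * y ^ p := by
  rcases le_total 0 p with hp | hp
  · calc x ^ p ≤ y ^ p := by gcongr
      _ ≤ 2 ^ |p| * y ^ p := le_mul_of_one_le_left (Real.rpow_nonneg (hx.le.trans hxy) p)
          (Real.one_le_rpow one_le_two (abs_nonneg p))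
  · calc x ^ p = 2 ^ (-p) * (2 * x) ^ p := by
          rw [Real.mul_rpow zero_le_two hx.le, ← mul_assoc, ← Real.rpow_add two_pos]
          simp
      _ ≤ 2 ^ |p| * y ^ p := by
          rw [abs_of_nonpos hp]
          exact mul_le_mul_of_nonneg_left (Real.rpow_le_rpow_of_nonpos (by linarith) hyx hp)
            (by positivity)

lemma exists_nat_inv_mem_Icc {x : ℝ} (hx0 : 0 < x) (hx1 : x ≤ 1) :
    ∃ N : ℕ, 1 ≤ N ∧ x ≤ (N : ℝ)⁻¹ ∧ (N : ℝ)⁻¹ ≤ 2 * x := by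
  have h1 : (1 : ℝ) ≤ x⁻¹ := one_le_inv₀ hx0 |>.mpr hx1
  have hN : 1 ≤ ⌊x⁻¹⌋₊ := Nat.le_floor (by exact_mod_cast h1)
  have hNpos : (0 : ℝ) < ⌊x⁻¹⌋₊ := by exact_mod_cast hN
  refine ⟨⌊x⁻¹⌋₊, hN, ?_, ?_⟩
  · rw [le_inv_comm₀ hx0 hNpos]
    exact Nat.floor_le (by positivity)
  · rw [inv_le_comm₀ hNpos (by positivity), mul_inv]
    have : (1 : ℝ) ≤ ⌊x⁻¹⌋₊ := by exact_mod_cast hN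
    linarith [Nat.lt_floor_add_one x⁻¹]

lemma half_le_pow_of_mul_le {b : ℝ} {n : ℕ} (hb : -1 ≤ b) (h : n * (1 - b) ≤ 1 / 2) :
    1 / 2 ≤ b ^ n := by
  have := one_add_mul_le_pow (a := b - 1) (by linarith) n
  rw [add_sub_cancel] at this
  linarith

namespace GeneralizedCesaro

noncomputable def moment (μ : Measure ℝ) (n : ℕ) : ℝ := ∫ t in Set.Ico (0 : ℝ) 1, t ^ n ∂μ

def IsCarleson (μ : Measure ℝ) (s : ℝ) : Prop :=
  ∃ C > 0, ∀ b ∈ Set.Ico (0 : ℝ) 1, (μ (Set.Ico b 1)).toReal ≤ C * (1 - b) ^ s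

/-- `‖C_μ f‖²_{D_β} ≤ C ‖f‖²_{D_α}` for `f = ∑ aₙ zⁿ`, written on the coefficients. -/
def IsBoundedWith (μ : Measure ℝ) (α β C : ℝ) : Prop :=
  ∀ a : ℕ → ℂ, Summable (fun n : ℕ => ((n : ℝ) + 1) ^ (1 - α) * ‖a n‖ ^ 2) →
    Summable (fun n : ℕ => ((n : ℝ) + 1) ^ (1 - β) * moment μ n ^ 2 *
      ‖∑ k ∈ range (n + 1), a k‖ ^ 2) ∧
    ∑' n : ℕ, ((n : ℝ) + 1) ^ (1 - β) * moment μ n ^ 2 * ‖∑ k ∈ range (n + 1), a k‖ ^ 2 ≤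
      C * ∑' n : ℕ, ((n : ℝ) + 1) ^ (1 - α) * ‖a n‖ ^ 2

variable {μ : Measure ℝ} [IsFiniteMeasure μ]

lemma pow_mul_measure_Ico_le_moment {b : ℝ} (hb : 0 ≤ b) (n : ℕ) :
    b ^ n * (μ (Set.Ico b 1)).toReal ≤ moment μ n := by
  have hint : IntegrableOn (fun t : ℝ => t ^ n) (Set.Ico 0 1) μ := by
    refine Measure.integrableOn_of_bounded (M := 1) (measure_ne_top μ _)
      (continuous_pow n).aestronglyMeasurable ?_
    filter_upwards [ae_restrict_mem measurableSet_Ico] with t ht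
    rw [Real.norm_eq_abs, abs_pow, abs_of_nonneg ht.1]
    exact pow_le_one₀ ht.1 ht.2.le
  have hsub : Set.Ico b 1 ⊆ Set.Ico 0 1 := Set.Ico_subset_Ico_left hb
  calc b ^ n * (μ (Set.Ico b 1)).toReal ≤ ∫ t in Set.Ico b 1, t ^ n ∂μ := by
        rw [mul_comm, ← smul_eq_mul, ← measureReal_def]
        exact setIntegral_ge_of_const_le measurableSet_Ico (measure_ne_top μ _)
          (fun t ht => pow_le_pow_left₀ hb ht.1 n) (hint.mono_set hsub)
    _ ≤ moment μ n := by
        refine setIntegral_mono_set hint ?_ hsub.eventuallyLE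
        filter_upwards [ae_restrict_mem measurableSet_Ico] with t ht
        exact pow_nonneg ht.1 n

lemma isCarleson_of_forall_Ico_le {c s C : ℝ} (hc : c < 1)
    (h : ∀ b ∈ Set.Ico c 1, (μ (Set.Ico b 1)).toReal ≤ C * (1 - b) ^ s) : IsCarleson μ s := by
  set M := (μ Set.univ).toReal
  set d := min 1 ((1 - c) ^ s)
  have hM : 0 ≤ M := ENNReal.toReal_nonneg
  have hd : 0 < d := lt_min one_pos (Real.rpow_pos_of_pos (by linarith) s)
  refine ⟨max C 0 + M / d + 1, by positivity, fun b ⟨hb0, hb1⟩ => ?_⟩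
  rcases le_or_gt c b with hcb | hbc
  · calc (μ (Set.Ico b 1)).toReal ≤ C * (1 - b) ^ s := h b ⟨hcb, hb1⟩
      _ ≤ (max C 0 + M / d + 1) * (1 - b) ^ s := by
          gcongr
          linarith [le_max_left C 0, div_nonneg hM hd.le]
  · have hd_le : d ≤ (1 - b) ^ s := by
      rcases le_total 0 s with hs | hs
      · exact min_le_of_right_le (Real.rpow_le_rpow (by linarith) (by linarith) hs)
      · exact min_le_of_left_le
          (Real.one_le_rpow_of_pos_of_le_one_of_nonpos (by linarith) (by linarith) hs)
    calc (μ (Set.Ico b 1)).toReal ≤ M := measureReal_mono (Set.subset_univ _)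
      _ = M / d * d := by field_simp
      _ ≤ M / d * (1 - b) ^ s := by gcongr
      _ ≤ (max C 0 + M / d + 1) * (1 - b) ^ s := by
          gcongr
          linarith [le_max_right C 0]

def indicatorRange (N : ℕ) (k : ℕ) : ℂ := if k < N then 1 else 0

lemma hasSum_rpow_mul_sq_norm_indicatorRange (α : ℝ) (N : ℕ) :
    HasSum (fun n : ℕ => ((n : ℝ) + 1) ^ (1 - α) * ‖indicatorRange N n‖ ^ 2)
      (∑ n ∈ range N, ((n : ℝ) + 1) ^ (1 - α)) := by
  have hsum : ∑ n ∈ range N, ((n : ℝ) + 1) ^ (1 - α) =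
      ∑ n ∈ range N, ((n : ℝ) + 1) ^ (1 - α) * ‖indicatorRange N n‖ ^ 2 :=
    sum_congr rfl fun n hn => by simp [indicatorRange, mem_range.mp hn]
  rw [hsum]
  exact hasSum_sum_of_ne_finset_zero fun n hn => by
    simp [indicatorRange, not_lt.mp (mem_range.not.mp hn)]

lemma sum_range_indicatorRange {N m : ℕ} (h : N ≤ m) :
    ∑ k ∈ range m, indicatorRange N k = N := by
  have hfilter : {k ∈ range m | k < N} = range N := by
    ext k
    simp only [mem_filter, mem_range]
    omega
  simp [indicatorRange, sum_boole, hfilter]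

lemma rpow_mul_sq_measure_Ico_le_tsum {b β : ℝ} {N : ℕ} (hb : 0 ≤ b) (hN : 1 ≤ N)
    (hNb : 2 * N * (1 - b) ≤ 1 / 2)
    (hs : Summable fun n : ℕ => ((n : ℝ) + 1) ^ (1 - β) * moment μ n ^ 2 *
      ‖∑ k ∈ range (n + 1), indicatorRange N k‖ ^ 2) :
    (N : ℝ) ^ (4 - β) * (μ (Set.Ico b 1)).toReal ^ 2 ≤ 4 * 2 ^ |1 - β| *
      ∑' n : ℕ, ((n : ℝ) + 1) ^ (1 - β) * moment μ n ^ 2 *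
        ‖∑ k ∈ range (n + 1), indicatorRange N k‖ ^ 2 := by
  set m := (μ (Set.Ico b 1)).toReal
  have hNpos : (0 : ℝ) < N := by exact_mod_cast hN
  have hterm : ∀ n ∈ Ico N (2 * N), (N : ℝ) ^ (1 - β) * m ^ 2 * (N : ℝ) ^ 2 ≤
      4 * 2 ^ |1 - β| * (((n : ℝ) + 1) ^ (1 - β) * moment μ n ^ 2 *
        ‖∑ k ∈ range (n + 1), indicatorRange N k‖ ^ 2) := by
    intro n hn
    obtain ⟨hNn, hn2N⟩ := mem_Ico.mp hn
    have hweight : (N : ℝ) ^ (1 - β) ≤ 2 ^ |1 - β| * ((n : ℝ) + 1) ^ (1 - β) :=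
      rpow_le_two_rpow_abs_mul_rpow' hNpos (by exact_mod_cast (by omega : N ≤ n + 1))
        (by exact_mod_cast (by omega : n + 1 ≤ 2 * N)) _
    have hmoment : m ^ 2 ≤ 4 * moment μ n ^ 2 := by
      have hbn : 1 / 2 ≤ b ^ n := half_le_pow_of_mul_le (by linarith) <| by
        have : (n : ℝ) ≤ 2 * N := by norm_cast; omega
        nlinarith
      calc m ^ 2 = 4 * (1 / 2 * m) ^ 2 := by ring
        _ ≤ 4 * (b ^ n * m) ^ 2 := by gcongr
        _ ≤ 4 * moment μ n ^ 2 := by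
            gcongr
            exact pow_mul_measure_Ico_le_moment hb n
    have hpartial : ‖∑ k ∈ range (n + 1), indicatorRange N k‖ = N := by
      rw [sum_range_indicatorRange (by omega)]
      simp
    rw [hpartial]
    calc (N : ℝ) ^ (1 - β) * m ^ 2 * (N : ℝ) ^ 2
        ≤ 2 ^ |1 - β| * ((n : ℝ) + 1) ^ (1 - β) * (4 * moment μ n ^ 2) * (N : ℝ) ^ 2 := by
          gcongr
      _ = _ := by ring
  calc (N : ℝ) ^ (4 - β) * m ^ 2
        = ∑ _n ∈ Ico N (2 * N), (N : ℝ) ^ (1 - β) * m ^ 2 * (N : ℝ) ^ 2 := by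
        rw [sum_const, Nat.card_Ico, two_mul, Nat.add_sub_cancel, nsmul_eq_mul,
          show (4 : ℝ) - β = 1 + (1 - β) + 2 by ring, Real.rpow_add hNpos, Real.rpow_add hNpos,
          Real.rpow_one, Real.rpow_two]
        ring
    _ ≤ ∑ n ∈ Ico N (2 * N), 4 * 2 ^ |1 - β| * (((n : ℝ) + 1) ^ (1 - β) * moment μ n ^ 2 *
        ‖∑ k ∈ range (n + 1), indicatorRange N k‖ ^ 2) := sum_le_sum hterm
    _ ≤ _ := by
        rw [← mul_sum]
        gcongr
        exact hs.sum_le_tsum _ fun n _ => by positivity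

lemma sq_measure_Ico_le {α β C b : ℝ} {N : ℕ} (hα : α < 2) (hC : 0 ≤ C)
    (hμ : IsBoundedWith μ α β C) (hb : 0 ≤ b) (hN : 1 ≤ N) (hNb : 2 * N * (1 - b) ≤ 1 / 2) :
    (μ (Set.Ico b 1)).toReal ^ 2 ≤
      4 * 2 ^ |1 - β| * C / min 1 (2 - α) * ((N : ℝ)⁻¹) ^ (2 + α - β) := by
  have hNpos : (0 : ℝ) < N := by exact_mod_cast hN
  have hmin : 0 < min 1 (2 - α) := lt_min one_pos (by linarith)
  have hD := hasSum_rpow_mul_sq_norm_indicatorRange α N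
  obtain ⟨hs, hbound⟩ := hμ (indicatorRange N) hD.summable
  rw [hD.tsum_eq] at hbound
  have hsum : ∑ n ∈ range N, ((n : ℝ) + 1) ^ (1 - α) ≤ (N : ℝ) ^ (2 - α) / min 1 (2 - α) := by
    rw [le_div_iff₀ hmin, mul_comm]
    simpa only [sub_sub_cancel_left, sub_neg_eq_add, show (2 : ℝ) - α - 1 = 1 - α by ring]
      using min_one_mul_sum_range_rpow_le (p := 2 - α) (by linarith) N
  have key : (N : ℝ) ^ (4 - β) * (μ (Set.Ico b 1)).toReal ^ 2 ≤
      4 * 2 ^ |1 - β| * C / min 1 (2 - α) * (N : ℝ) ^ (2 - α) :=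
    calc _ ≤ _ := rpow_mul_sq_measure_Ico_le_tsum hb hN hNb hs
      _ ≤ 4 * 2 ^ |1 - β| * (C * ((N : ℝ) ^ (2 - α) / min 1 (2 - α))) :=
          mul_le_mul_of_nonneg_left (hbound.trans (mul_le_mul_of_nonneg_left hsum hC))
            (by positivity)
      _ = _ := by ring
  rw [Real.inv_rpow hNpos.le, ← Real.rpow_neg hNpos.le, ← mul_le_mul_iff_right₀
    (Real.rpow_pos_of_pos hNpos (4 - β))]
  refine key.trans_eq ?_
  rw [mul_left_comm, ← Real.rpow_add hNpos]
  ring_nf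

theorem isCarleson_of_isBoundedWith {α β C : ℝ} (hα : α < 2) (hC : 0 ≤ C)
    (hμ : IsBoundedWith μ α β C) : IsCarleson μ (1 + (α - β) / 2) := by
  set γ := 1 + (α - β) / 2
  set K := 4 * 2 ^ |1 - β| * C / min 1 (2 - α)
  have hK : 0 ≤ K := div_nonneg (by positivity) (le_min zero_le_one (by linarith))
  refine isCarleson_of_forall_Ico_le (c := 3 / 4) (C := √K * 2 ^ |γ| * 4 ^ γ) (by norm_num)
    fun b ⟨hb, hb1⟩ => ?_
  obtain ⟨N, hN, hxN, hNx⟩ := exists_nat_inv_mem_Icc (x := 4 * (1 - b)) (by linarith)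
    (by linarith)
  have hNpos : (0 : ℝ) < N := by exact_mod_cast hN
  have hNb : 2 * N * (1 - b) ≤ 1 / 2 := by
    have := mul_le_mul_of_nonneg_left hxN hNpos.le
    rw [mul_inv_cancel₀ hNpos.ne'] at this
    linarith
  have hsq := sq_measure_Ico_le hα hC hμ (by linarith) hN hNb
  have hroot : (μ (Set.Ico b 1)).toReal ≤ √K * ((N : ℝ)⁻¹) ^ γ := by
    refine (pow_le_pow_iff_left₀ ENNReal.toReal_nonneg (by positivity) two_ne_zero).mp ?_
    have hexp : γ * ((2 : ℕ) : ℝ) = 2 + α - β := by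
      simp only [γ]
      push_cast
      ring
    rwa [mul_pow, Real.sq_sqrt hK, ← Real.rpow_mul_natCast (by positivity), hexp]
  calc (μ (Set.Ico b 1)).toReal ≤ √K * ((N : ℝ)⁻¹) ^ γ := hroot
    _ ≤ √K * (2 ^ |γ| * (4 * (1 - b)) ^ γ) := by
        gcongr
        exact rpow_le_two_rpow_abs_mul_rpow (by linarith) hxN hNx γ
    _ = √K * 2 ^ |γ| * 4 ^ γ * (1 - b) ^ γ := by
        rw [Real.mul_rpow (by norm_num) (by linarith)]
        ring

end GeneralizedCesaro

theorem bounded_implies_carleson_general (α β : ℝ) (hα2 : α < 2)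
    (μ : Measure ℝ) [IsFiniteMeasure μ]
    (hbd : ∃ C > (0 : ℝ), ∀ a : ℕ → ℂ,
      Summable (fun n : ℕ => ((n : ℝ) + 1) ^ (1 - α) * ‖a n‖ ^ 2) →
      Summable (fun n : ℕ => ((n : ℝ) + 1) ^ (1 - β) *
        (∫ t in Set.Ico (0 : ℝ) 1, t ^ n ∂μ) ^ 2 * ‖∑ k ∈ Finset.range (n + 1), a k‖ ^ 2) ∧
      ∑' n : ℕ, ((n : ℝ) + 1) ^ (1 - β) *
          (∫ t in Set.Ico (0 : ℝ) 1, t ^ n ∂μ) ^ 2 * ‖∑ k ∈ Finset.range (n + 1), a k‖ ^ 2 ≤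
        C * ∑' n : ℕ, ((n : ℝ) + 1) ^ (1 - α) * ‖a n‖ ^ 2) :
    ∃ C' > (0 : ℝ), ∀ b ∈ Set.Ico (0 : ℝ) 1,
      (μ (Set.Ico b 1)).toReal ≤ C' * (1 - b) ^ (1 + (α - β) / 2) := by
  obtain ⟨C, hC, hμ⟩ := hbd
  exact GeneralizedCesaro.isCarleson_of_isBoundedWith hα2 hC.le hμ

/-- If `0 < α, β < 2` and the generalized Cesàro operator `C_μ` is bounded from `D_α` into
`D_β`, then `μ` is a `[1+(α-β)/2]`-Carleson measure on `[0,1)`. -/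
theorem bounded_implies_carleson (α β : ℝ) (hα0 : 0 < α) (hα2 : α < 2)
    (hβ0 : 0 < β) (hβ2 : β < 2)
    (μ : Measure ℝ) [IsFiniteMeasure μ] (hμsupp : μ (Set.Ico (0 : ℝ) 1)ᶜ = 0)
    (hbd : ∃ C > (0 : ℝ), ∀ a : ℕ → ℂ,
      Summable (fun n : ℕ => ((n : ℝ) + 1) ^ (1 - α) * ‖a n‖ ^ 2) →
      Summable (fun n : ℕ => ((n : ℝ) + 1) ^ (1 - β) *
        (∫ t in Set.Ico (0 : ℝ) 1, t ^ n ∂μ) ^ 2 * ‖∑ k ∈ Finset.range (n + 1), a k‖ ^ 2) ∧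
      ∑' n : ℕ, ((n : ℝ) + 1) ^ (1 - β) *
          (∫ t in Set.Ico (0 : ℝ) 1, t ^ n ∂μ) ^ 2 * ‖∑ k ∈ Finset.range (n + 1), a k‖ ^ 2 ≤
        C * ∑' n : ℕ, ((n : ℝ) + 1) ^ (1 - α) * ‖a n‖ ^ 2) :
    ∃ C' > (0 : ℝ), ∀ b ∈ Set.Ico (0 : ℝ) 1,
      (μ (Set.Ico b 1)).toReal ≤ C' * (1 - b) ^ (1 + (α - β) / 2) :=
  bounded_implies_carleson_general α β hα2 μ hbd
end

section
/- Let 0 < α < 2, 0 < β < 2, and let μ be a positive (finite) Borel measure on [0,1). If μ is a vanishing [1 + (α-β)/2]-Carleson measure on [0,1), then μ[n] = o((n+1)^{-1-(α-β)/2}) as n → ∞; that is, (n+1)^{1+(α-β)/2} μ[n] → 0 as n → ∞. -/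
/-!
By the layer-cake formula, `∫_{[0,1)} tⁿ dμ = ∫₀^∞ μ([u^{1/n}, 1)) du`. Given `ε > 0`, the
vanishing Carleson condition gives `μ([t, 1)) ≤ ε (1 - t)^s` for `t` close to `1`, and
`1 - u^{1/n} ≤ log (1/u) / n ≤ 2s u^{-1/(2s)} / n`, so the range `t₀ⁿ < u < 1` contributes
`O(ε n^{-s})` because `u^{-1/2}` is integrable. The range `u ≤ t₀ⁿ` contributes at most
`μ(ℝ) t₀ⁿ`, which decays geometrically.
-/

open MeasureTheory Filter Real Set Topology
open scoped ENNReal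

theorem one_sub_rpow_inv_natCast_le {u p : ℝ} (hu : 0 < u) (hp : 0 < p) {n : ℕ} :
    1 - u ^ (n : ℝ)⁻¹ ≤ u ^ (-p) / (p * n) := by
  calc 1 - u ^ (n : ℝ)⁻¹ ≤ -log (u ^ (n : ℝ)⁻¹) := by
        linarith [log_le_sub_one_of_pos (rpow_pos_of_pos hu (n : ℝ)⁻¹)]
    _ = log u⁻¹ / n := by rw [log_rpow hu, log_inv]; ring
    _ ≤ u⁻¹ ^ p / p / n := by gcongr; exact log_le_rpow_div (by positivity) hp
    _ = u ^ (-p) / (p * n) := by rw [inv_rpow hu.le, ← rpow_neg hu.le, div_div]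

theorem one_sub_rpow_inv_natCast_rpow_le {u s : ℝ} (hu₀ : 0 < u) (hu₁ : u ≤ 1) (hs : 0 < s)
    (n : ℕ) : (1 - u ^ (n : ℝ)⁻¹) ^ s ≤ (2 * s) ^ s / n ^ s * u ^ (-(1 / 2) : ℝ) := by
  have hp : 0 < (2 * s)⁻¹ := by positivity
  calc (1 - u ^ (n : ℝ)⁻¹) ^ s ≤ (u ^ (-(2 * s)⁻¹) / ((2 * s)⁻¹ * n)) ^ s := by
        gcongr
        · exact sub_nonneg.2 (rpow_le_one hu₀.le hu₁ (by positivity))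
        · exact one_sub_rpow_inv_natCast_le hu₀ hp
    _ = (2 * s) ^ s / n ^ s * u ^ (-(1 / 2) : ℝ) := by
        rw [div_rpow (by positivity) (by positivity), mul_rpow hp.le (by positivity),
          inv_rpow (by positivity), ← rpow_mul hu₀.le]
        field_simp

theorem tendsto_natCast_rpow_mul_pow_of_lt_one (s : ℝ) {r : ℝ} (hr₀ : 0 < r) (hr₁ : r < 1) :
    Tendsto (fun n : ℕ => (n : ℝ) ^ s * r ^ n) atTop (𝓝 0) := by
  refine ((tendsto_rpow_mul_exp_neg_mul_atTop_nhds_zero s (-log r)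
    (neg_pos.2 (log_neg hr₀ hr₁))).comp tendsto_natCast_atTop_atTop).congr fun n => ?_
  rw [Function.comp_apply, neg_neg, mul_comm (log r), ← log_pow, exp_log (pow_pos hr₀ n)]

theorem lintegral_Ioo_rpow {r : ℝ} (hr : -1 < r) :
    ∫⁻ u in Ioo (0 : ℝ) 1, ENNReal.ofReal (u ^ r) = ENNReal.ofReal (r + 1)⁻¹ := by
  have hint : IntegrableOn (fun u : ℝ => u ^ r) (Ioc 0 1) :=
    (intervalIntegrable_iff_integrableOn_Ioc_of_le zero_le_one).1
      (intervalIntegral.intervalIntegrable_rpow' hr)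
  rw [← ofReal_integral_eq_lintegral_ofReal (hint.mono_set Ioo_subset_Ioc_self)
    ((ae_restrict_iff' measurableSet_Ioo).2 (ae_of_all _ fun u hu => rpow_nonneg hu.1.le r)),
    ← integral_Ioc_eq_integral_Ioo, ← intervalIntegral.integral_of_le zero_le_one,
    integral_rpow (Or.inl hr)]
  simp [zero_rpow (by linarith : r + 1 ≠ 0)]

theorem setOf_le_pow_inter_Ico {u : ℝ} (hu : 0 ≤ u) {n : ℕ} (hn : n ≠ 0) :
    {a : ℝ | u ≤ a ^ n} ∩ Ico 0 1 = Ico (u ^ (n : ℝ)⁻¹) 1 := by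
  ext a
  simp only [mem_inter_iff, mem_ofPred_eq, mem_Ico]
  constructor
  · rintro ⟨hua, ha₀, ha₁⟩
    refine ⟨?_, ha₁⟩
    calc u ^ (n : ℝ)⁻¹ ≤ (a ^ n) ^ (n : ℝ)⁻¹ := by gcongr
      _ = a := pow_rpow_inv_natCast ha₀ hn
  · rintro ⟨hua, ha₁⟩
    have ha₀ : 0 ≤ a := (rpow_nonneg hu _).trans hua
    refine ⟨?_, ha₀, ha₁⟩
    calc u = (u ^ (n : ℝ)⁻¹) ^ n := (rpow_inv_natCast_pow hu hn).symm
      _ ≤ a ^ n := by gcongr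

theorem setIntegral_Ico_pow_eq_lintegral (μ : Measure ℝ) {n : ℕ} (hn : n ≠ 0) :
    ∫ t in Ico (0 : ℝ) 1, t ^ n ∂μ = (∫⁻ u in Ioi 0, μ (Ico (u ^ (n : ℝ)⁻¹) 1)).toReal := by
  have hnn : 0 ≤ᵐ[μ.restrict (Ico 0 1)] fun t : ℝ => t ^ n :=
    (ae_restrict_iff' measurableSet_Ico).2 (ae_of_all _ fun _ ht => pow_nonneg ht.1 n)
  rw [integral_eq_lintegral_of_nonneg_ae hnn (continuous_pow n).aestronglyMeasurable,
    lintegral_eq_lintegral_meas_le _ hnn (continuous_pow n).aemeasurable]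
  congr 1
  refine setLIntegral_congr_fun measurableSet_Ioi fun u hu => ?_
  rw [Measure.restrict_apply (measurableSet_le measurable_const (continuous_pow n).measurable),
    setOf_le_pow_inter_Ico (le_of_lt hu) hn]

theorem measure_Ico_rpow_inv_le_of_tail_le {μ : Measure ℝ} {s t₀ : ℝ} {ε : ℝ≥0∞} (hs : 0 < s)
    (ht₀ : 0 ≤ t₀) {n : ℕ} (hn : n ≠ 0)
    (htail : ∀ t ∈ Ioo t₀ 1, μ (Ico t 1) ≤ ε * ENNReal.ofReal ((1 - t) ^ s))
    {u : ℝ} (hu : u ∈ Ioo (t₀ ^ n) 1) :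
    μ (Ico (u ^ (n : ℝ)⁻¹) 1) ≤
      ε * (ENNReal.ofReal ((2 * s) ^ s / n ^ s) * ENNReal.ofReal (u ^ (-(1 / 2) : ℝ))) := by
  obtain ⟨hut, hu₁⟩ := hu
  have hu₀ : 0 < u := (pow_nonneg ht₀ n).trans_lt hut
  have hv : u ^ (n : ℝ)⁻¹ ∈ Ioo t₀ 1 :=
    ⟨(pow_rpow_inv_natCast ht₀ hn).symm.trans_lt
      (rpow_lt_rpow (pow_nonneg ht₀ n) hut (by positivity)),
      rpow_lt_one hu₀.le hu₁ (by positivity)⟩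
  calc μ (Ico (u ^ (n : ℝ)⁻¹) 1) ≤ ε * ENNReal.ofReal ((1 - u ^ (n : ℝ)⁻¹) ^ s) := htail _ hv
    _ ≤ _ := by
      rw [← ENNReal.ofReal_mul (by positivity)]
      gcongr
      exact one_sub_rpow_inv_natCast_rpow_le hu₀ hu₁.le hs n

theorem lintegral_measure_Ico_rpow_inv_le {μ : Measure ℝ} {s t₀ : ℝ} {ε : ℝ≥0∞} (hs : 0 < s)
    (ht₀ : 0 ≤ t₀) {n : ℕ} (hn : n ≠ 0)
    (htail : ∀ t ∈ Ioo t₀ 1, μ (Ico t 1) ≤ ε * ENNReal.ofReal ((1 - t) ^ s)) :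
    ∫⁻ u in Ioi 0, μ (Ico (u ^ (n : ℝ)⁻¹) 1) ≤
      μ univ * ENNReal.ofReal (t₀ ^ n) + ε * ENNReal.ofReal (2 * (2 * s) ^ s / n ^ s) := by
  set f := fun u : ℝ => μ (Ico (u ^ (n : ℝ)⁻¹) 1)
  have hcover : Ioi (0 : ℝ) ⊆ (Ioc 0 (t₀ ^ n) ∪ Ioo (t₀ ^ n) 1) ∪ Ici 1 := by
    intro u hu
    rcases le_or_gt u (t₀ ^ n) with hut | hut
    · exact Or.inl (Or.inl ⟨hu, hut⟩)
    rcases lt_or_ge u 1 with hu₁ | hu₁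
    · exact Or.inl (Or.inr ⟨hut, hu₁⟩)
    · exact Or.inr hu₁
  have hlow : ∫⁻ u in Ioc 0 (t₀ ^ n), f u ≤ μ univ * ENNReal.ofReal (t₀ ^ n) :=
    calc _ ≤ ∫⁻ _ in Ioc 0 (t₀ ^ n), μ univ :=
          lintegral_mono fun u => measure_mono (subset_univ _)
      _ = _ := by rw [setLIntegral_const, volume_Ioc, sub_zero]
  have hmid : ∫⁻ u in Ioo (t₀ ^ n) 1, f u ≤ ε * ENNReal.ofReal (2 * (2 * s) ^ s / n ^ s) :=
    calc _ ≤ ∫⁻ u in Ioo (t₀ ^ n) 1,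
          ε * (ENNReal.ofReal ((2 * s) ^ s / n ^ s) * ENNReal.ofReal (u ^ (-(1 / 2) : ℝ))) :=
          setLIntegral_mono' measurableSet_Ioo fun u hu =>
            measure_Ico_rpow_inv_le_of_tail_le hs ht₀ hn htail hu
      _ ≤ ∫⁻ u in Ioo 0 1,
          ε * (ENNReal.ofReal ((2 * s) ^ s / n ^ s) * ENNReal.ofReal (u ^ (-(1 / 2) : ℝ))) :=
          lintegral_mono_set (Ioo_subset_Ioo_left (pow_nonneg ht₀ n))
      _ = ε * ENNReal.ofReal (2 * (2 * s) ^ s / n ^ s) := by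
          rw [lintegral_const_mul _ (by fun_prop), lintegral_const_mul _ (by fun_prop),
            lintegral_Ioo_rpow (by norm_num), ← ENNReal.ofReal_mul (by positivity)]
          norm_num [mul_div_assoc, mul_comm]
  have hhigh : ∫⁻ u in Ici 1, f u = 0 :=
    (setLIntegral_congr_fun measurableSet_Ici fun u hu => by
      dsimp only [f]
      rw [Ico_eq_empty (not_lt.2 (one_le_rpow hu (by positivity))), measure_empty]).trans
      lintegral_zero
  calc ∫⁻ u in Ioi 0, f u ≤ ∫⁻ u in (Ioc 0 (t₀ ^ n) ∪ Ioo (t₀ ^ n) 1) ∪ Ici 1, f u :=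
        lintegral_mono_set hcover
    _ ≤ ((∫⁻ u in Ioc 0 (t₀ ^ n), f u) + ∫⁻ u in Ioo (t₀ ^ n) 1, f u) + ∫⁻ u in Ici 1, f u :=
        (lintegral_union_le _ _ _).trans (add_le_add (lintegral_union_le _ _ _) le_rfl)
    _ ≤ _ := by
        rw [hhigh, add_zero]
        exact add_le_add hlow hmid

theorem setIntegral_Ico_pow_nonneg (μ : Measure ℝ) (n : ℕ) :
    0 ≤ ∫ t in Ico (0 : ℝ) 1, t ^ n ∂μ :=
  setIntegral_nonneg measurableSet_Ico fun _ ht => pow_nonneg ht.1 n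

theorem setIntegral_Ico_pow_le {μ : Measure ℝ} [IsFiniteMeasure μ] {s t₀ ε : ℝ} (hs : 0 < s)
    (ht₀ : 0 ≤ t₀) (hε : 0 ≤ ε) {n : ℕ} (hn : n ≠ 0)
    (htail : ∀ t ∈ Ioo t₀ 1, (μ (Ico t 1)).toReal ≤ ε * (1 - t) ^ s) :
    ∫ t in Ico (0 : ℝ) 1, t ^ n ∂μ ≤
      (μ univ).toReal * t₀ ^ n + ε * (2 * (2 * s) ^ s / n ^ s) := by
  have htail' : ∀ t ∈ Ioo t₀ 1,
      μ (Ico t 1) ≤ ENNReal.ofReal ε * ENNReal.ofReal ((1 - t) ^ s) := fun t ht => by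
    rw [← ENNReal.ofReal_mul hε, ← ENNReal.ofReal_toReal (measure_ne_top μ _)]
    exact ENNReal.ofReal_le_ofReal (htail t ht)
  rw [setIntegral_Ico_pow_eq_lintegral μ hn]
  refine ENNReal.toReal_le_of_le_ofReal (by positivity) ?_
  calc _ ≤ _ := lintegral_measure_Ico_rpow_inv_le hs ht₀ hn htail'
    _ = _ := by
      rw [ENNReal.ofReal_add (by positivity) (by positivity), ENNReal.ofReal_mul (by positivity),
        ENNReal.ofReal_mul hε, ENNReal.ofReal_toReal (measure_ne_top μ _)]

theorem exists_measure_Ico_le_of_tendsto {μ : Measure ℝ} {s : ℝ}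
    (hvan : Tendsto (fun t : ℝ => (μ (Ico t 1)).toReal / (1 - t) ^ s) (𝓝[<] 1) (𝓝 0))
    {ε : ℝ} (hε : 0 < ε) :
    ∃ t₀ ∈ Ioo (0 : ℝ) 1, ∀ t ∈ Ioo t₀ 1, (μ (Ico t 1)).toReal ≤ ε * (1 - t) ^ s := by
  obtain ⟨l, hl, hsub⟩ := mem_nhdsLT_iff_exists_Ioo_subset.1 (hvan (Iio_mem_nhds hε))
  refine ⟨max l (1 / 2), ⟨by positivity, max_lt hl (by norm_num)⟩, ?_⟩
  rintro t ⟨hlt, ht₁⟩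
  have hratio : (μ (Ico t 1)).toReal / (1 - t) ^ s < ε :=
    hsub ⟨(le_max_left _ _).trans_lt hlt, ht₁⟩
  exact ((div_lt_iff₀ (rpow_pos_of_pos (sub_pos.2 ht₁) s)).1 hratio).le

theorem tendsto_natCast_rpow_mul_setIntegral_Ico_pow {μ : Measure ℝ} [IsFiniteMeasure μ]
    {s : ℝ} (hs : 0 < s)
    (hvan : Tendsto (fun t : ℝ => (μ (Ico t 1)).toReal / (1 - t) ^ s) (𝓝[<] 1) (𝓝 0)) :
    Tendsto (fun n : ℕ => (n : ℝ) ^ s * ∫ t in Ico (0 : ℝ) 1, t ^ n ∂μ) atTop (𝓝 0) := by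
  refine tendsto_order.2 ⟨fun a ha => Eventually.of_forall fun n =>
    ha.trans_le (mul_nonneg (by positivity) (setIntegral_Ico_pow_nonneg μ n)), fun ε hε => ?_⟩
  set C := 2 * (2 * s) ^ s
  have hC : 0 < C := by positivity
  obtain ⟨t₀, ⟨ht₀, ht₁⟩, htail⟩ :=
    exists_measure_Ico_le_of_tendsto hvan (show 0 < ε / (2 * C) by positivity)
  have hgeom : ∀ᶠ n : ℕ in atTop, (μ univ).toReal * ((n : ℝ) ^ s * t₀ ^ n) < ε / 2 := by
    refine ((tendsto_natCast_rpow_mul_pow_of_lt_one s ht₀ ht₁).const_mul _).eventually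
      (gt_mem_nhds ?_)
    simpa using half_pos hε
  filter_upwards [hgeom, eventually_ne_atTop 0] with n hn hn₀
  calc (n : ℝ) ^ s * ∫ t in Ico (0 : ℝ) 1, t ^ n ∂μ
      ≤ n ^ s * ((μ univ).toReal * t₀ ^ n + ε / (2 * C) * (C / n ^ s)) := by
        gcongr
        exact setIntegral_Ico_pow_le hs ht₀.le (by positivity) hn₀ htail
    _ = (μ univ).toReal * ((n : ℝ) ^ s * t₀ ^ n) + ε / 2 := by
        field_simp
    _ < ε := by linarith

theorem vanishing_carleson_implies_moment_little_o_general (α β : ℝ) (hα0 : 0 < α)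
    (hβ2 : β < 2)
    (μ : Measure ℝ) [IsFiniteMeasure μ]
    (hvan : Tendsto (fun t : ℝ => (μ (Set.Ico t 1)).toReal / (1 - t) ^ (1 + (α - β) / 2))
      (nhdsWithin 1 (Set.Iio 1)) (nhds 0)) :
    Tendsto (fun n : ℕ =>
        ((n : ℝ) + 1) ^ (1 + (α - β) / 2) * ∫ t in Set.Ico (0 : ℝ) 1, t ^ n ∂μ)
      atTop (nhds 0) := by
  have hs : 0 < 1 + (α - β) / 2 := by linarith
  set s := 1 + (α - β) / 2
  have hshift : ∀ᶠ n : ℕ in atTop, ((n : ℝ) + 1) ^ s * ∫ t in Ico (0 : ℝ) 1, t ^ n ∂μ ≤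
      2 ^ s * ((n : ℝ) ^ s * ∫ t in Ico (0 : ℝ) 1, t ^ n ∂μ) := by
    filter_upwards [eventually_ge_atTop 1] with n hn
    have hn' : (1 : ℝ) ≤ n := by exact_mod_cast hn
    rw [← mul_assoc, ← mul_rpow zero_le_two (Nat.cast_nonneg n)]
    gcongr ?_ ^ s * _
    · exact setIntegral_Ico_pow_nonneg μ n
    · linarith
  refine squeeze_zero' (Eventually.of_forall fun n =>
    mul_nonneg (by positivity) (setIntegral_Ico_pow_nonneg μ n)) hshift ?_
  simpa using (tendsto_natCast_rpow_mul_setIntegral_Ico_pow hs hvan).const_mul (2 ^ s)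

/-- If `0 < α, β < 2` and `μ` is a vanishing `[1+(α-β)/2]`-Carleson measure on `[0,1)`, then
`μ[n] = o((n+1)^{-1-(α-β)/2})` as `n → ∞`, i.e. `(n+1)^{1+(α-β)/2} μ[n] → 0`. -/
theorem vanishing_carleson_implies_moment_little_o (α β : ℝ) (hα0 : 0 < α) (hα2 : α < 2)
    (hβ0 : 0 < β) (hβ2 : β < 2)
    (μ : Measure ℝ) [IsFiniteMeasure μ] (hμsupp : μ (Set.Ico (0 : ℝ) 1)ᶜ = 0)
    (hcar : ∃ C > (0 : ℝ), ∀ t ∈ Set.Ico (0 : ℝ) 1,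
      (μ (Set.Ico t 1)).toReal ≤ C * (1 - t) ^ (1 + (α - β) / 2))
    (hvan : Tendsto (fun t : ℝ => (μ (Set.Ico t 1)).toReal / (1 - t) ^ (1 + (α - β) / 2))
      (nhdsWithin 1 (Set.Iio 1)) (nhds 0)) :
    Tendsto (fun n : ℕ =>
        ((n : ℝ) + 1) ^ (1 + (α - β) / 2) * ∫ t in Set.Ico (0 : ℝ) 1, t ^ n ∂μ)
      atTop (nhds 0) :=
  vanishing_carleson_implies_moment_little_o_general α β hα0 hβ2 μ hvan
end

section
/- Let s > 0 and let μ be a positive (finite) Borel measure on [0,1) satisfying μ([t,1)) ≤ C (1-t)^s for all t ∈ [0,1), for some constant C > 0. Then for every integer n ≥ 1, μ[n] ≤ C n B(n, 1+s) = C n Γ(n)Γ(1+s)/Γ(n+1+s), and consequently there is a constant C' > 0 (depending only on C and s) such that μ[n] ≤ C' (n+1)^{-s} for all integers n ≥ 0. -/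
/-! By the layer-cake formula with weight `n t^(n-1)`, `μ[n] = n ∫₀¹ t^(n-1) μ([t,1)) dt`, which
the Carleson condition bounds by `C n B(n, 1+s)`. Comparing slopes of the convex function `log ∘ Γ`
on `[x, x+1]` and `[x+1, x+1+s]` gives `x^s Γ(x+1) ≤ Γ(x+1+s)`, hence
`n B(n, 1+s) = Γ(1+s) Γ(n+1) / Γ(n+1+s) ≤ Γ(1+s) n^(-s) ≤ 2^s Γ(1+s) (n+1)^(-s)`. -/

open MeasureTheory Set Real

namespace Real

theorem integral_Ioo_rpow_mul_one_sub_rpow {a b : ℝ} (ha : 0 < a) (hb : 0 < b) :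
    ∫ t in Ioo (0 : ℝ) 1, t ^ (a - 1) * (1 - t) ^ (b - 1) = Gamma a * Gamma b / Gamma (a + b) := by
  have h := Complex.betaIntegral_eq_Gamma_mul_div a b (by simpa) (by simpa)
  rw [← Complex.ofReal_add, Complex.Gamma_ofReal, Complex.Gamma_ofReal, Complex.Gamma_ofReal,
    Complex.betaIntegral] at h
  rw [← integral_Ioc_eq_integral_Ioo, ← intervalIntegral.integral_of_le zero_le_one]
  refine Complex.ofReal_injective ?_
  rw [← intervalIntegral.integral_ofReal]
  push_cast
  rw [← h]
  refine intervalIntegral.integral_congr fun t ht => ?_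
  rw [uIcc_of_le zero_le_one] at ht
  rw [Complex.ofReal_cpow ht.1, Complex.ofReal_cpow (sub_nonneg.2 ht.2)]
  push_cast
  rfl

theorem integral_Ioo_pow_mul_one_sub_rpow {n : ℕ} (hn : n ≠ 0) {s : ℝ} (hs : -1 < s) :
    ∫ t in Ioo (0 : ℝ) 1, t ^ (n - 1) * (1 - t) ^ s =
      Gamma n * Gamma (1 + s) / Gamma (n + 1 + s) := by
  rw [add_assoc, ← integral_Ioo_rpow_mul_one_sub_rpow (by positivity) (by linarith)]
  refine setIntegral_congr_fun measurableSet_Ioo fun t _ => ?_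
  rw [← rpow_natCast, Nat.cast_sub (Nat.one_le_iff_ne_zero.2 hn), add_sub_cancel_left,
    Nat.cast_one]

theorem rpow_mul_Gamma_add_one_le_Gamma_add {x s : ℝ} (hx : 0 < x) (hs : 0 < s) :
    x ^ s * Gamma (x + 1) ≤ Gamma (x + 1 + s) := by
  have hslope := convexOn_log_Gamma.slope_mono_adjacent (x := x) (y := x + 1) (z := x + 1 + s)
    hx (show 0 < x + 1 + s by linarith) (by linarith) (by linarith)
  have hlog : log (Gamma (x + 1)) - log (Gamma x) = log x := by
    rw [Gamma_add_one hx.ne', log_mul hx.ne' (Gamma_pos_of_pos hx).ne']; ring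
  simp only [Function.comp, hlog, add_sub_cancel_left, div_one, le_div_iff₀ hs] at hslope
  have hΓ := Gamma_pos_of_pos (by linarith : 0 < x + 1)
  have hΓs := Gamma_pos_of_pos (by linarith : 0 < x + 1 + s)
  rw [← le_div_iff₀ hΓ, rpow_def_of_pos hx, ← exp_log hΓs, ← exp_log hΓ, ← exp_sub, exp_le_exp]
  linarith

theorem nat_mul_Gamma_mul_Gamma_div_le {n : ℕ} (hn : n ≠ 0) {s : ℝ} (hs : 0 < s) :
    n * (Gamma n * Gamma (1 + s) / Gamma (n + 1 + s)) ≤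
      2 ^ s * Gamma (1 + s) * ((n : ℝ) + 1) ^ (-s) := by
  have hn₁ : (1 : ℝ) ≤ n := Nat.one_le_cast.2 (Nat.one_le_iff_ne_zero.2 hn)
  have hn₀ : (0 : ℝ) < n := by linarith
  have hshift : ((n : ℝ) + 1) ^ s ≤ n ^ s * 2 ^ s := by
    rw [← mul_rpow hn₀.le zero_le_two]; exact rpow_le_rpow (by positivity) (by linarith) hs.le
  have := Gamma_pos_of_pos (by linarith : 0 < 1 + s)
  have := Gamma_pos_of_pos (by linarith : 0 < (n : ℝ) + 1)
  calc n * (Gamma n * Gamma (1 + s) / Gamma (n + 1 + s))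
      = Gamma (1 + s) * Gamma (n + 1) / Gamma (n + 1 + s) := by
        rw [Gamma_add_one hn₀.ne']; ring
    _ ≤ Gamma (1 + s) * Gamma (n + 1) / ((n : ℝ) ^ s * Gamma (n + 1)) := by
        gcongr; exact rpow_mul_Gamma_add_one_le_Gamma_add hn₀ hs
    _ = Gamma (1 + s) * ((n : ℝ) ^ s)⁻¹ := by field_simp
    _ ≤ Gamma (1 + s) * (2 ^ s * (((n : ℝ) + 1) ^ s)⁻¹) := by
        gcongr
        rw [← div_eq_mul_inv, le_div_iff₀ (by positivity), inv_mul_le_iff₀ (rpow_pos_of_pos hn₀ s)]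
        exact hshift
    _ = 2 ^ s * Gamma (1 + s) * ((n : ℝ) + 1) ^ (-s) := by
        rw [rpow_neg (by positivity)]; ring

end Real

theorem lintegral_pow_eq_lintegral_meas_Ici_mul (ν : Measure ℝ) (hν : ∀ᵐ x ∂ν, 0 ≤ x)
    {n : ℕ} (hn : n ≠ 0) :
    ∫⁻ x, ENNReal.ofReal (x ^ n) ∂ν =
      ∫⁻ t in Ioi 0, ν (Ici t) * ENNReal.ofReal (n * t ^ (n - 1)) := by
  have hcont : Continuous fun t : ℝ => (n : ℝ) * t ^ (n - 1) := by fun_prop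
  have hprimitive (x : ℝ) : ∫ t in 0..x, (n : ℝ) * t ^ (n - 1) = x ^ n := by
    rw [intervalIntegral.integral_eq_sub_of_hasDerivAt (fun t _ => hasDerivAt_pow n t)
      (hcont.intervalIntegrable _ _), zero_pow hn, sub_zero]
  have h := lintegral_comp_eq_lintegral_meas_le_mul ν hν measurable_id.aemeasurable
    (fun t _ => hcont.intervalIntegrable 0 t)
    (ae_restrict_of_forall_mem measurableSet_Ioi fun t (ht : 0 < t) => by positivity)
  simp only [hprimitive] at h
  exact h

theorem restrict_Ico_apply_Ici_le_indicator {μ : Measure ℝ} [IsFiniteMeasure μ] {F : ℝ → ℝ}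
    (hF : ∀ t ∈ Ico (0 : ℝ) 1, μ.real (Ico t 1) ≤ F t) {t : ℝ} (ht : 0 ≤ t) :
    μ.restrict (Ico 0 1) (Ici t) ≤ (Iio 1).indicator (fun t => ENNReal.ofReal (F t)) t := by
  rw [Measure.restrict_apply measurableSet_Ici]
  rcases lt_or_ge t 1 with ht1 | ht1
  · rw [indicator_of_mem (show t ∈ Iio 1 from ht1)]
    calc μ (Ici t ∩ Ico 0 1) ≤ μ (Ico t 1) := measure_mono fun x hx => ⟨hx.1, hx.2.2⟩
      _ ≤ ENNReal.ofReal (F t) := by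
        rw [← ofReal_measureReal]; exact ENNReal.ofReal_le_ofReal (hF t ⟨ht, ht1⟩)
  · have hempty : Ici t ∩ Ico 0 1 = ∅ :=
      eq_empty_of_forall_notMem fun x hx => (ht1.trans hx.1).not_gt hx.2.2
    rw [hempty, measure_empty]
    exact zero_le

theorem setIntegral_Ico_pow_le_of_measureReal_Ico_le {μ : Measure ℝ} [IsFiniteMeasure μ]
    {C s : ℝ} (hC : 0 ≤ C) (hs : 0 ≤ s)
    (hcar : ∀ t ∈ Ico (0 : ℝ) 1, μ.real (Ico t 1) ≤ C * (1 - t) ^ s) {n : ℕ} (hn : n ≠ 0) :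
    ∫ t in Ico (0 : ℝ) 1, t ^ n ∂μ ≤ C * n * ∫ t in Ioo (0 : ℝ) 1, t ^ (n - 1) * (1 - t) ^ s := by
  have hν : ∀ᵐ x ∂μ.restrict (Ico 0 1), 0 ≤ x :=
    ae_restrict_of_forall_mem measurableSet_Ico fun x hx => hx.1
  have hdensity_nonneg : ∀ t ∈ Ioo (0 : ℝ) 1, 0 ≤ C * n * (t ^ (n - 1) * (1 - t) ^ s) :=
    fun t ht => by have := sub_pos.2 ht.2; have := ht.1; positivity
  have hdensity_int : IntegrableOn (fun t : ℝ => C * n * (t ^ (n - 1) * (1 - t) ^ s)) (Ioo 0 1) :=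
    (by fun_prop (disch := exact hs) : Continuous fun t : ℝ => C * n * (t ^ (n - 1) * (1 - t) ^ s))
      |>.integrableOn_Icc.mono_set Ioo_subset_Icc_self
  rw [integral_eq_lintegral_of_nonneg_ae (hν.mono fun x hx => pow_nonneg hx n) (by fun_prop),
    ← integral_const_mul]
  refine ENNReal.toReal_le_of_le_ofReal (setIntegral_nonneg measurableSet_Ioo hdensity_nonneg) ?_
  calc ∫⁻ x, ENNReal.ofReal (x ^ n) ∂μ.restrict (Ico 0 1)
      = ∫⁻ t in Ioi 0, μ.restrict (Ico 0 1) (Ici t) * ENNReal.ofReal (n * t ^ (n - 1)) :=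
        lintegral_pow_eq_lintegral_meas_Ici_mul _ hν hn
    _ ≤ ∫⁻ t in Ioi 0, (Iio 1).indicator
          (fun t => ENNReal.ofReal (C * (1 - t) ^ s) * ENNReal.ofReal (n * t ^ (n - 1))) t :=
        setLIntegral_mono' measurableSet_Ioi fun t ht => by
          rw [indicator_mul_left]
          exact mul_le_mul_left (restrict_Ico_apply_Ici_le_indicator hcar (le_of_lt ht)) _
    _ = ∫⁻ t in Ioo 0 1, ENNReal.ofReal (C * n * (t ^ (n - 1) * (1 - t) ^ s)) := by
        rw [lintegral_indicator measurableSet_Iio, Measure.restrict_restrict measurableSet_Iio,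
          Iio_inter_Ioi]
        refine setLIntegral_congr_fun measurableSet_Ioo fun t ht => ?_
        rw [← ENNReal.ofReal_mul (by have := sub_pos.2 ht.2; positivity)]
        ring_nf
    _ = ENNReal.ofReal (∫ t in Ioo 0 1, C * n * (t ^ (n - 1) * (1 - t) ^ s)) :=
        (ofReal_integral_eq_lintegral_ofReal hdensity_int
          (ae_restrict_of_forall_mem measurableSet_Ioo hdensity_nonneg)).symm

theorem carleson_moment_beta_bound_general (s : ℝ) (hs : 0 < s)
    (μ : Measure ℝ) [IsFiniteMeasure μ]
    (C : ℝ) (hC : 0 < C)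
    (hcar : ∀ t ∈ Set.Ico (0 : ℝ) 1,
      (μ (Set.Ico t 1)).toReal ≤ C * (1 - t) ^ s) :
    (∀ n : ℕ, 1 ≤ n →
      (∫ t in Set.Ico (0 : ℝ) 1, t ^ n ∂μ) ≤
          C * n * ∫ t in Set.Ioo (0 : ℝ) 1, t ^ (n - 1) * (1 - t) ^ s ∧
      (∫ t in Set.Ioo (0 : ℝ) 1, t ^ (n - 1) * (1 - t) ^ s) =
        Real.Gamma n * Real.Gamma (1 + s) / Real.Gamma (n + 1 + s)) ∧
    ∃ C' > (0 : ℝ), ∀ n : ℕ,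
      (∫ t in Set.Ico (0 : ℝ) 1, t ^ n ∂μ) ≤ C' * ((n : ℝ) + 1) ^ (-s) := by
  have hbeta (n : ℕ) (hn : n ≠ 0) := integral_Ioo_pow_mul_one_sub_rpow hn (by linarith : -1 < s)
  have hmoment (n : ℕ) (hn : n ≠ 0) :=
    setIntegral_Ico_pow_le_of_measureReal_Ico_le hC.le hs.le hcar hn
  refine ⟨fun n hn => ⟨hmoment n (by omega), hbeta n (by omega)⟩,
    C * max 1 (2 ^ s * Gamma (1 + s)), by positivity, fun n => ?_⟩
  rcases eq_or_ne n 0 with rfl | hn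
  · calc ∫ t in Ico (0 : ℝ) 1, t ^ 0 ∂μ = (μ (Ico 0 1)).toReal := by simp [Measure.real]
      _ ≤ C := by simpa using hcar 0 (by simp)
      _ ≤ C * max 1 (2 ^ s * Gamma (1 + s)) * ((0 : ℕ) + 1 : ℝ) ^ (-s) := by
        simpa using le_mul_of_one_le_right hC.le (le_max_left _ _)
  calc ∫ t in Ico (0 : ℝ) 1, t ^ n ∂μ
      ≤ C * (n * (Gamma n * Gamma (1 + s) / Gamma (n + 1 + s))) := by
        rw [← hbeta n hn, ← mul_assoc]; exact hmoment n hn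
    _ ≤ C * (2 ^ s * Gamma (1 + s) * ((n : ℝ) + 1) ^ (-s)) :=
        mul_le_mul_of_nonneg_left (nat_mul_Gamma_mul_Gamma_div_le hn hs) hC.le
    _ ≤ C * max 1 (2 ^ s * Gamma (1 + s)) * ((n : ℝ) + 1) ^ (-s) := by
        rw [← mul_assoc]; gcongr; exact le_max_right _ _

/-- If `μ` is a finite positive Borel measure on `[0,1)` with `μ([t,1)) ≤ C (1-t)^s` for all
`t ∈ [0,1)`, then for every `n ≥ 1`,
`μ[n] ≤ C n B(n, 1+s)` with `B(n, 1+s) = ∫₀¹ t^{n-1}(1-t)^s dt = Γ(n)Γ(1+s)/Γ(n+1+s)`,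
and consequently `μ[n] ≤ C' (n+1)^{-s}` for all `n ≥ 0` and some `C' > 0`. -/
theorem carleson_moment_beta_bound (s : ℝ) (hs : 0 < s)
    (μ : Measure ℝ) [IsFiniteMeasure μ] (hμsupp : μ (Set.Ico (0 : ℝ) 1)ᶜ = 0)
    (C : ℝ) (hC : 0 < C)
    (hcar : ∀ t ∈ Set.Ico (0 : ℝ) 1,
      (μ (Set.Ico t 1)).toReal ≤ C * (1 - t) ^ s) :
    (∀ n : ℕ, 1 ≤ n →
      (∫ t in Set.Ico (0 : ℝ) 1, t ^ n ∂μ) ≤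
          C * n * ∫ t in Set.Ioo (0 : ℝ) 1, t ^ (n - 1) * (1 - t) ^ s ∧
      (∫ t in Set.Ioo (0 : ℝ) 1, t ^ (n - 1) * (1 - t) ^ s) =
        Real.Gamma n * Real.Gamma (1 + s) / Real.Gamma (n + 1 + s)) ∧
    ∃ C' > (0 : ℝ), ∀ n : ℕ,
      (∫ t in Set.Ico (0 : ℝ) 1, t ^ n ∂μ) ≤ C' * ((n : ℝ) + 1) ^ (-s) :=
  carleson_moment_beta_bound_general s hs μ C hC hcar
end
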